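/- arXiv:2403.03290 — 4 statements merged into one kernel-verified Lean document; each statement's English description precedes it below -/
import Mathlib

section
/- If Invariant 1 holds for every bucket S_i, then the union S = ⋃_{i=0}^{k-1} S_i is a (1+ε)-spanner of the point set: for every pair of points u, v, the shortest path distance in S between u and v is at most (1+ε)·d(u,v). -/
open scoped BigOperators

/-- The cost of a candidate replacement path from `u` to `v` through a list of
edges `e₁, …, e_l`: edges of the bucket cost their length, while the gaps
(missing pairs) cost `(1+ε)` times their length. -/
noncomputable def chainCost {X : Type*} [MetricSpace X] (ε : ℝ) : X → X → List (X × X) → ℝ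
  | u, v, [] => (1 + ε) * dist u v
  | u, v, e :: rest => (1 + ε) * dist u e.1 + dist e.1 e.2 + chainCost ε e.2 v rest

/-- The Euclidean length of a polygonal path given by its list of vertices. -/
noncomputable def pathLen {X : Type*} [MetricSpace X] : List X → ℝ
  | [] => 0
  | [_] => 0
  | a :: b :: rest => dist a b + pathLen (b :: rest)

lemma chainCost_nonneg {X : Type*} [MetricSpace X] {ε : ℝ} (hε : 0 ≤ ε) :
    ∀ (u v : X) (L : List (X × X)), 0 ≤ chainCost ε u v L
  | u, v, [] => by
      simp only [chainCost]
      have := dist_nonneg (x := u) (y := v)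
      nlinarith
  | u, v, e :: rest => by
      simp only [chainCost]
      have h1 := chainCost_nonneg hε e.2 v rest
      have h2 := dist_nonneg (x := u) (y := e.1)
      have h3 := dist_nonneg (x := e.1) (y := e.2)
      nlinarith

lemma pathLen_concat {X : Type*} [MetricSpace X] :
    ∀ (A : List X) (x b : X), A.getLast? = some x →
      pathLen (A ++ [b]) = pathLen A + dist x b
  | [], x, b, h => by simp at h
  | [a], x, b, h => by
      simp only [List.getLast?_singleton, Option.some.injEq] at h
      subst h
      simp [pathLen]
  | a :: y :: rest, x, b, h => by
      have h' : (y :: rest).getLast? = some x := by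
        rw [← h]; rfl
      have := pathLen_concat (y :: rest) x b h'
      simp only [List.cons_append, List.append_eq, pathLen] at *
      rw [this]; ring

lemma pathLen_append {X : Type*} [MetricSpace X] :
    ∀ (A : List X) (a : X) (B : List X),
      pathLen (A ++ a :: B) = pathLen (A ++ [a]) + pathLen (a :: B)
  | [], a, B => by simp [pathLen]
  | [x], a, B => by simp [pathLen]
  | x :: y :: rest, a, B => by
      have := pathLen_append (y :: rest) a B
      simp only [List.cons_append, List.append_eq, pathLen] at *
      rw [this]; ring

/-- Helper: turn a chain of bucket edges with small gaps into a genuine path,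
given that all gaps (which are strictly shorter than `D0`) can already be
spanned. -/
lemma build_path {X : Type*} [MetricSpace X] {ε : ℝ} (hε : 0 < ε)
    (V : Set X) (S : ℤ → Set (X × X))
    (hSV : ∀ i, ∀ e ∈ S i, e.1 ∈ V ∧ e.2 ∈ V) (i : ℤ) (D0 : ℝ)
    (IH : ∀ a ∈ V, ∀ b ∈ V, dist a b < D0 →
      ∃ pts : List X, pts.head? = some a ∧ pts.getLast? = some b ∧
        List.Chain' (fun a b => ∃ j : ℤ, (a, b) ∈ S j) pts ∧
        pathLen pts ≤ (1 + ε) * dist a b) :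
    ∀ L : List (X × X), ∀ u ∈ V, ∀ v ∈ V, (∀ e ∈ L, e ∈ S i) →
      chainCost ε u v L < (1 + ε) * D0 →
      ∃ pts : List X, pts.head? = some u ∧ pts.getLast? = some v ∧
        List.Chain' (fun a b => ∃ j : ℤ, (a, b) ∈ S j) pts ∧
        pathLen pts ≤ chainCost ε u v L := by
  intro L
  induction L with
  | nil =>
      intro u hu v hv _ hlt
      simp only [chainCost] at hlt ⊢
      have hd : dist u v < D0 := by
        have h1 : (0:ℝ) < 1 + ε := by linarith
        exact lt_of_mul_lt_mul_left hlt (le_of_lt h1)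
      exact IH u hu v hv hd
  | cons e rest ih =>
      intro u hu v hv hL hlt
      have heS : e ∈ S i := hL e List.mem_cons_self
      obtain ⟨he1, he2⟩ := hSV i e heS
      have h1 : (0:ℝ) < 1 + ε := by linarith
      have hrest_nonneg : 0 ≤ chainCost ε e.2 v rest := chainCost_nonneg hε.le e.2 v rest
      have hdist12 : (0:ℝ) ≤ dist e.1 e.2 := dist_nonneg
      simp only [chainCost] at hlt
      -- gap u → e.1
      have hgap : dist u e.1 < D0 := by
        have : (1 + ε) * dist u e.1 < (1 + ε) * D0 := by linarith
        exact lt_of_mul_lt_mul_left this h1.le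
      obtain ⟨P1, hP1h, hP1l, hP1c, hP1len⟩ := IH u hu e.1 he1 hgap
      -- recursive call
      have hrest_lt : chainCost ε e.2 v rest < (1 + ε) * D0 := by
        have hgap0 : (0:ℝ) ≤ (1 + ε) * dist u e.1 := by positivity
        linarith
      obtain ⟨P2, hP2h, hP2l, hP2c, hP2len⟩ :=
        ih e.2 he2 v hv (fun f hf => hL f (List.mem_cons_of_mem e hf)) hrest_lt
      -- structure of P2
      have hP2ne : P2 ≠ [] := by intro h; rw [h] at hP2h; simp at hP2h
      have hP1ne : P1 ≠ [] := by intro h; rw [h] at hP1h; simp at hP1h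
      obtain ⟨b, t, rfl⟩ : ∃ b t, P2 = b :: t := by
        cases P2 with
        | nil => exact absurd rfl hP2ne
        | cons b t => exact ⟨b, t, rfl⟩
      have hb : b = e.2 := by simpa using hP2h
      subst hb
      refine ⟨P1 ++ e.2 :: t, ?_, ?_, ?_, ?_⟩
      · cases P1 with
        | nil => exact absurd rfl hP1ne
        | cons p q => simpa using hP1h
      · rw [List.getLast?_append_of_ne_nil _ (by simp)]
        exact hP2l
      · rw [List.Chain', List.isChain_append]
        refine ⟨hP1c, hP2c, ?_⟩
        intro x hx y hy
        rw [hP1l] at hx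
        simp only [Option.mem_def, Option.some.injEq] at hx
        simp only [List.head?_cons, Option.mem_def, Option.some.injEq] at hy
        subst hx; subst hy
        exact ⟨i, heS⟩
      · rw [pathLen_append P1 e.2 t, pathLen_concat P1 e.1 e.2 hP1l]
        simp only [chainCost]
        linarith

/-- If Invariant 1 holds for every bucket `S i`, then the union `S = ⋃ i, S i`
is a `(1+ε)`-spanner of the finite point set `V`: every pair `u, v ∈ V` is
connected in `S` by a path of length at most `(1+ε) · d(u,v)`. -/
theorem invariant_one_implies_spanner (dd k : ℕ) (hk : 0 < k) (c ε : ℝ) (hc : 1 < c)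
    (hε : 0 < ε)
    (V : Set (EuclideanSpace ℝ (Fin dd))) (hV : V.Finite)
    (S : ℤ → Set (EuclideanSpace ℝ (Fin dd) × EuclideanSpace ℝ (Fin dd)))
    (hSV : ∀ i, ∀ e ∈ S i, e.1 ∈ V ∧ e.2 ∈ V)
    (hSsymm : ∀ i a b, (a, b) ∈ S i → (b, a) ∈ S i)
    (hinv : ∀ u ∈ V, ∀ v ∈ V, u ≠ v →
      (u, v) ∉ S (⌊Real.logb c (dist u v)⌋ % (k : ℤ)) →
      ∃ L : List (EuclideanSpace ℝ (Fin dd) × EuclideanSpace ℝ (Fin dd)),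
        (∀ e ∈ L, e ∈ S (⌊Real.logb c (dist u v)⌋ % (k : ℤ))) ∧
        chainCost ε u v L < (1 + ε) * dist u v) :
    ∀ u ∈ V, ∀ v ∈ V, ∃ pts : List (EuclideanSpace ℝ (Fin dd)),
      pts.head? = some u ∧ pts.getLast? = some v ∧
      List.Chain' (fun a b => ∃ i : ℤ, (a, b) ∈ S i) pts ∧
      pathLen pts ≤ (1 + ε) * dist u v := by
  classical
  set Vfin : Finset (EuclideanSpace ℝ (Fin dd)) := hV.toFinset with hVfin
  set Dfin : Finset ℝ := (Vfin ×ˢ Vfin).image (fun p => dist p.1 p.2) with hDfin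
  have hmem : ∀ a ∈ V, ∀ b ∈ V, dist a b ∈ Dfin := by
    intro a ha b hb
    apply Finset.mem_image.mpr
    exact ⟨(a, b), Finset.mem_product.mpr ⟨hV.mem_toFinset.mpr ha, hV.mem_toFinset.mpr hb⟩, rfl⟩
  -- measure
  have hmono : ∀ a ∈ V, ∀ b ∈ V, ∀ (r : ℝ), dist a b < r →
      (Dfin.filter (fun d => d < dist a b)).card < (Dfin.filter (fun d => d < r)).card := by
    intro a ha b hb r hr
    apply Finset.card_lt_card
    constructor
    · intro d hd
      simp only [Finset.mem_filter] at hd ⊢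
      exact ⟨hd.1, lt_trans hd.2 hr⟩
    · intro hsub
      have h1 : dist a b ∈ Dfin.filter (fun d => d < r) :=
        Finset.mem_filter.mpr ⟨hmem a ha b hb, hr⟩
      have h2 := hsub h1
      simp only [Finset.mem_filter] at h2
      exact lt_irrefl _ h2.2
  have key : ∀ n : ℕ, ∀ u ∈ V, ∀ v ∈ V,
      (Dfin.filter (fun d => d < dist u v)).card < n →
      ∃ pts : List (EuclideanSpace ℝ (Fin dd)),
        pts.head? = some u ∧ pts.getLast? = some v ∧
        List.Chain' (fun a b => ∃ i : ℤ, (a, b) ∈ S i) pts ∧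
        pathLen pts ≤ (1 + ε) * dist u v := by
    intro n
    induction n with
    | zero => intro u _ v _ h; exact absurd h (Nat.not_lt_zero _)
    | succ n ihn =>
      intro u hu v hv hcard
      by_cases huv : u = v
      · subst huv
        refine ⟨[u], rfl, rfl, List.isChain_singleton u, ?_⟩
        simp [pathLen, dist_self]
      · set idx : ℤ := ⌊Real.logb c (dist u v)⌋ % (k : ℤ) with hidx
        by_cases hedge : (u, v) ∈ S idx
        · refine ⟨[u, v], rfl, rfl, ?_, ?_⟩
          · exact List.isChain_pair.mpr ⟨idx, hedge⟩
          · simp only [pathLen]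
            have := dist_nonneg (x := u) (y := v)
            nlinarith
        · obtain ⟨L, hLS, hLcost⟩ := hinv u hu v hv huv hedge
          have IH : ∀ a ∈ V, ∀ b ∈ V, dist a b < dist u v →
              ∃ pts : List (EuclideanSpace ℝ (Fin dd)),
                pts.head? = some a ∧ pts.getLast? = some b ∧
                List.Chain' (fun a b => ∃ i : ℤ, (a, b) ∈ S i) pts ∧
                pathLen pts ≤ (1 + ε) * dist a b := by
            intro a ha b hb hab
            apply ihn a ha b hb
            have := hmono a ha b hb (dist u v) hab
            omega
          obtain ⟨pts, h1, h2, h3, h4⟩ :=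
            build_path hε V S hSV idx (dist u v) IH L u hu v hv hLS hLcost
          exact ⟨pts, h1, h2, h3, le_of_lt (lt_of_le_of_lt h4 hLcost)⟩
  intro u hu v hv
  exact key ((Dfin.filter (fun d => d < dist u v)).card + 1) u hu v hv (Nat.lt_succ_self _)
end

section
/- Edge separation: let (u,w) and (y,z) be two potential pairs in the same bucket (same index and size), arising as type-I edges at hierarchy levels l ≥ l' respectively, not connecting the same pair of chains. Then λ^{-1}·R^{l−l'} < c, and max(d(u,y), d(w,z)) > (1/(λ²·c))·max(d(u,w), d(y,z)). -/
/-- Edge separation: let `(u,w)` and `(y,z)` be two potential pairs in the same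
bucket (length ratios less than `c` in both directions), arising as type-I
edges at hierarchy levels `l ≥ l'` (so their lengths lie in `(R^l, λR^l]` and
`(R^{l'}, λR^{l'}]`), not connecting the same pair of chains, so that the
separation property gives `max(d(u,y), d(w,z)) ≥ R^{l'}`. Then
`λ⁻¹·R^{l-l'} < c` and
`max(d(u,y), d(w,z)) > (1/(λ²c))·max(d(u,w), d(y,z))`. -/
theorem edge_separation (dd : ℕ) (R lam c : ℝ) (hR : 1 < R) (hc : 1 < c) (hclam : c < lam)
    (u w y z : EuclideanSpace ℝ (Fin dd)) (l l' : ℤ) (hll : l' ≤ l)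
    (huw1 : R ^ l < dist u w) (huw2 : dist u w ≤ lam * R ^ l)
    (hyz1 : R ^ l' < dist y z) (hyz2 : dist y z ≤ lam * R ^ l')
    (hbucket1 : dist u w / dist y z < c) (hbucket2 : dist y z / dist u w < c)
    (hsep : R ^ l' ≤ max (dist u y) (dist w z)) :
    lam⁻¹ * R ^ (l - l') < c ∧
    (1 / (lam ^ 2 * c)) * max (dist u w) (dist y z) < max (dist u y) (dist w z) := by
  have hR0 : (0:ℝ) < R := lt_trans one_pos hR
  have hlam0 : (0:ℝ) < lam := lt_trans (lt_trans one_pos hc) hclam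
  have hc0 : (0:ℝ) < c := lt_trans one_pos hc
  have hRl' : (0:ℝ) < R ^ l' := zpow_pos hR0 l'
  have hRl : (0:ℝ) < R ^ l := zpow_pos hR0 l
  have hyz0 : (0:ℝ) < dist y z := lt_trans hRl' hyz1
  -- R^l < c * (lam * R^{l'})
  have key : R ^ l < c * (lam * R ^ l') := by
    have h1 : dist u w < c * dist y z := (div_lt_iff₀ hyz0).mp hbucket1
    calc R ^ l < dist u w := huw1
      _ < c * dist y z := h1
      _ ≤ c * (lam * R ^ l') := by
          exact mul_le_mul_of_nonneg_left hyz2 (le_of_lt hc0)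
  have hpow : R ^ (l - l') = R ^ l / R ^ l' := by
    exact zpow_sub₀ (ne_of_gt hR0) l l'
  have hpart1 : lam⁻¹ * R ^ (l - l') < c := by
    rw [hpow]
    rw [inv_mul_lt_iff₀ hlam0, div_lt_iff₀ hRl']
    nlinarith
  refine ⟨hpart1, ?_⟩
  have hmax1 : max (dist u w) (dist y z) ≤ lam * R ^ l := by
    apply max_le huw2
    calc dist y z ≤ lam * R ^ l' := hyz2
      _ ≤ lam * R ^ l := by
          have := zpow_le_zpow_right₀ (le_of_lt hR) hll
          nlinarith
  have hlc : lam ^ 2 * c > 0 := by positivity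
  calc (1 / (lam ^ 2 * c)) * max (dist u w) (dist y z)
      ≤ (1 / (lam ^ 2 * c)) * (lam * R ^ l) := by
        apply mul_le_mul_of_nonneg_left hmax1; positivity
    _ = R ^ l / (lam * c) := by field_simp
    _ < R ^ l' := by
        rw [div_lt_iff₀ (by positivity)]
        nlinarith
    _ ≤ max (dist u y) (dist w z) := hsep
end

section
/- Potential drop from fixing Invariant 1: let ε > ε' > 0, C_φ > 1, and suppose a pair (v,w) has d*(v,w)/d(v,w) > 1+ε. Before adding the edge its potential is C_φ·(d*(v,w)/d(v,w) − (1+ε')) and after adding it the potential is (1+ε) − d*(v,w)/d(v,w). Then the potential change of the pair satisfies Δp = (ε−ε') + (C_φ+1)·(1+ε' − d*(v,w)/d(v,w)) < −C_φ·(ε−ε'). Consequently, if the increase on other pairs is at most C_3/(c^k−1) and k ≥ log_c(1 + C_3/((C_φ−1)(ε−ε'))), the total potential decreases by at least (ε−ε'). -/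
/-- Potential drop from fixing a violation of Invariant 1: if the pair `(v,w)`
has `d*(v,w)/d(v,w) > 1+ε`, then adding its edge changes its potential from
`C_φ·(d*/d - (1+ε'))` to `(1+ε) - d*/d`, a change equal to
`(ε-ε') + (C_φ+1)(1+ε' - d*/d)` and less than `-C_φ(ε-ε')`; hence if the
potential increase on other pairs is at most `C₃/(c^k-1)` and
`k ≥ log_c(1 + C₃/((C_φ-1)(ε-ε')))`, the total potential decreases by at least
`ε-ε'`. -/
theorem potential_drop_fix_inv1 (ε ε' Cφ c C₃ dstar dl : ℝ) (k : ℕ)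
    (hε : ε' < ε) (hε' : 0 < ε') (hCφ : 1 < Cφ) (hc : 1 < c) (hC₃ : 0 < C₃)
    (hk : 1 ≤ k) (hdl : 0 < dl) (hviol : 1 + ε < dstar / dl) :
    (((1 + ε) - dstar / dl) - Cφ * (dstar / dl - (1 + ε')) =
      (ε - ε') + (Cφ + 1) * (1 + ε' - dstar / dl)) ∧
    (((1 + ε) - dstar / dl) - Cφ * (dstar / dl - (1 + ε')) < -(Cφ * (ε - ε'))) ∧
    (∀ other : ℝ, other ≤ C₃ / (c ^ k - 1) →
      Real.logb c (1 + C₃ / ((Cφ - 1) * (ε - ε'))) ≤ (k : ℝ) →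
      (((1 + ε) - dstar / dl) - Cφ * (dstar / dl - (1 + ε'))) + other ≤ -(ε - ε')) := by
  refine ⟨by ring, by nlinarith, ?_⟩
  intro other hother hlog
  set x : ℝ := 1 + C₃ / ((Cφ - 1) * (ε - ε')) with hx
  have hεε : 0 < ε - ε' := by linarith
  have hden : 0 < (Cφ - 1) * (ε - ε') := mul_pos (by linarith) hεε
  have hxpos : 0 < x := by
    have h0 : 0 < C₃ / ((Cφ - 1) * (ε - ε')) := div_pos hC₃ hden
    rw [hx]; linarith
  have hxle : x ≤ c ^ k := by
    have h1 : x = c ^ Real.logb c x := (Real.rpow_logb (by linarith) (by linarith) hxpos).symm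
    have h2 : c ^ Real.logb c x ≤ c ^ (k : ℝ) :=
      Real.rpow_le_rpow_of_exponent_le (le_of_lt hc) hlog
    calc x = c ^ Real.logb c x := h1
      _ ≤ c ^ (k : ℝ) := h2
      _ = c ^ k := by rw [Real.rpow_natCast]
  have hck : (1:ℝ) < c ^ k := by
    calc (1:ℝ) = 1 ^ k := (one_pow k).symm
      _ < c ^ k := by
        apply pow_lt_pow_left₀ hc (by norm_num)
        omega
  have hck1 : 0 < c ^ k - 1 := by linarith
  have hkey : C₃ / (c ^ k - 1) ≤ (Cφ - 1) * (ε - ε') := by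
    rw [div_le_iff₀ hck1]
    have : C₃ / ((Cφ - 1) * (ε - ε')) ≤ c ^ k - 1 := by
      have := hxle; simp [hx] at this ⊢; linarith
    calc C₃ = (C₃ / ((Cφ - 1) * (ε - ε'))) * ((Cφ - 1) * (ε - ε')) := by
          exact (div_mul_cancel₀ _ hden.ne').symm
      _ ≤ (c ^ k - 1) * ((Cφ - 1) * (ε - ε')) := by
          apply mul_le_mul_of_nonneg_right this (le_of_lt hden)
      _ = (Cφ - 1) * (ε - ε') * (c ^ k - 1) := by ring
  have hother' : other ≤ (Cφ - 1) * (ε - ε') := le_trans hother hkey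
  nlinarith [hviol, hother', hεε]
end

section
/- Potential drop from fixing Invariant 2: let ε > ε' > 0, C_φ > 1, and suppose a pair (v,w) with its edge in the bucket has d*(v,w)/d(v,w) ≤ 1+ε'. Removing the edge changes the pair's potential by Δp = −(ε−ε') − (C_φ+1)·(1+ε' − d*(v,w)/d(v,w)), and since 1+ε' − d*(v,w)/d(v,w) ≥ 0 we get Δp ≤ −(ε−ε'). Consequently, if the increase on higher pairs is at most C_5/(c^k−1) and k ≥ log_c(1 + 2C_5/(ε−ε')), the total potential decreases by at least (ε−ε')/2. -/
/-- Potential drop from fixing a violation of Invariant 2: if the pair `(v,w)`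
(with its edge in the bucket) has `d*(v,w)/d(v,w) ≤ 1+ε'`, then removing the
edge changes its potential from `(1+ε) - d*/d` to `C_φ·(d*/d - (1+ε'))`, a
change equal to `-(ε-ε') - (C_φ+1)(1+ε' - d*/d)` and at most `-(ε-ε')`; hence
if the potential increase on higher pairs is at most `C₅/(c^k-1)` and
`k ≥ log_c(1 + 2C₅/(ε-ε'))`, the total potential decreases by at least
`(ε-ε')/2`. -/
theorem potential_drop_fix_inv2 (ε ε' Cφ c C₅ dstar dl : ℝ) (k : ℕ)
    (hε : ε' < ε) (hε' : 0 < ε') (hCφ : 1 < Cφ) (hc : 1 < c) (hC₅ : 0 < C₅)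
    (hk : 1 ≤ k) (hdl : 0 < dl) (hdstar : 0 < dstar)
    (hviol : dstar / dl ≤ 1 + ε') :
    (Cφ * (dstar / dl - (1 + ε')) - ((1 + ε) - dstar / dl) =
      -(ε - ε') - (Cφ + 1) * (1 + ε' - dstar / dl)) ∧
    (Cφ * (dstar / dl - (1 + ε')) - ((1 + ε) - dstar / dl) ≤ -(ε - ε')) ∧
    (∀ other : ℝ, other ≤ C₅ / (c ^ k - 1) →
      Real.logb c (1 + 2 * C₅ / (ε - ε')) ≤ (k : ℝ) →
      (Cφ * (dstar / dl - (1 + ε')) - ((1 + ε) - dstar / dl)) + other ≤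
        -((ε - ε') / 2)) := by
  have hεε : 0 < ε - ε' := by linarith
  refine ⟨by ring, by nlinarith [hviol], ?_⟩
  intro other hother hlog
  have hx : (0:ℝ) < 1 + 2 * C₅ / (ε - ε') := by positivity
  have hle : 1 + 2 * C₅ / (ε - ε') ≤ c ^ k := by
    have := (Real.logb_le_iff_le_rpow hc hx).mp hlog
    rwa [Real.rpow_natCast] at this
  have hck1 : 2 * C₅ / (ε - ε') ≤ c ^ k - 1 := by linarith
  have hpos : 0 < 2 * C₅ / (ε - ε') := by positivity
  have hckpos : 0 < c ^ k - 1 := lt_of_lt_of_le hpos hck1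
  have h2 : C₅ / (c ^ k - 1) ≤ (ε - ε') / 2 := by
    rw [div_le_div_iff₀ hckpos (by norm_num)]
    rw [div_le_iff₀ hεε] at hck1
    nlinarith
  nlinarith [hviol]
end
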